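/- arXiv:1502.03788 — 4 statements merged into one kernel-verified Lean document; each statement's English description precedes it below -/
import Mathlib

section
/- Let e be an extremal point of the attractor F and let a : ℕ → {1,…,n} be an infinite address of e, meaning e ∈ T_{a|L}(F) for every L ∈ ℕ, where a|L denotes the length-L prefix of a. If e is not eventually periodic, then the inverse iterates T_{a|L}⁻¹(e), L = 0, 1, 2, …, are pairwise distinct extremal points of F; in particular Ext(F) is infinite. -/
open Complex

noncomputable section

/-- Composition of IFS maps along a finite word: `T_a = T_{a₁} ∘ ⋯ ∘ T_{a_L}`. -/
def wordMap {n : ℕ} (T : Fin n → ℂ → ℂ) : List (Fin n) → ℂ → ℂ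
  | [] => id
  | k :: a => T k ∘ wordMap T a

/-- Product of factors along a finite word: `φ_a = φ_{a₁} ⋯ φ_{a_L}`. -/
def wordFactor {n : ℕ} (φ : Fin n → ℂ) (a : List (Fin n)) : ℂ :=
  (a.map φ).prod

/-- `e` is an extremal point of `S`: it belongs to `S` and does not lie in the open
segment between any two distinct points of `S`. -/
def IsExtremal (S : Set ℂ) (e : ℂ) : Prop :=
  e ∈ S ∧ ¬ ∃ s₁ s₂ : ℂ, s₁ ∈ S ∧ s₂ ∈ S ∧ s₁ ≠ s₂ ∧
    ∃ t : ℝ, 0 < t ∧ t < 1 ∧ e = t • s₁ + (1 - t) • s₂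

/-! If `e = T_u(g)` is extremal, then so is `g`, because `T_u` is an injective affine self-map
of `F`. If moreover `T_u(g) = T_{uv}(g)` with `v` nonempty, then `g` is the fixed point `p_v`
of the contraction `T_v`, so `e = T_u(p_v)` is eventually periodic. Hence for a point that is
not eventually periodic the preimages of `e` along the prefixes of its address are distinct. -/

open Function Set

lemma IsExtremal.of_add_mul {S : Set ℂ} {b c e g : ℂ} (hc : c ≠ 0)
    (hS : MapsTo (fun z => b + c * z) S S) (he : IsExtremal S e) (hg : g ∈ S)
    (hge : b + c * g = e) : IsExtremal S g := by
  refine ⟨hg, fun ⟨s₁, s₂, h₁, h₂, hne, t, ht₀, ht₁, hcomb⟩ => he.2 ?_⟩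
  refine ⟨b + c * s₁, b + c * s₂, hS h₁, hS h₂,
    fun h => hne (mul_left_cancel₀ hc (add_left_cancel h)), t, ht₀, ht₁, ?_⟩
  rw [← hge, hcomb]
  simp only [Complex.real_smul]
  push_cast
  ring

lemma List.ofFn_add_eq_append {α : Type*} (a : ℕ → α) (L d : ℕ) :
    List.ofFn (fun i : Fin (L + d) => a i) =
      List.ofFn (fun i : Fin L => a i) ++ List.ofFn (fun j : Fin d => a (L + j)) := by
  rw [List.ofFn_add]
  rfl

section WordMap

variable {n : ℕ} {p φ : Fin n → ℂ} {T : Fin n → ℂ → ℂ}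

lemma wordFactor_cons (φ : Fin n → ℂ) (k : Fin n) (x : List (Fin n)) :
    wordFactor φ (k :: x) = φ k * wordFactor φ x := by
  simp [wordFactor]

lemma wordFactor_ne_zero (hφ : ∀ k, φ k ≠ 0) (x : List (Fin n)) : wordFactor φ x ≠ 0 :=
  List.prod_ne_zero fun h => by
    obtain ⟨k, -, hk⟩ := List.mem_map.mp h
    exact hφ k hk

lemma norm_wordFactor_le_one (hφ : ∀ k, ‖φ k‖ < 1) (x : List (Fin n)) :
    ‖wordFactor φ x‖ ≤ 1 := by
  induction x with
  | nil => simp [wordFactor]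
  | cons k x ih =>
    rw [wordFactor_cons, norm_mul]
    exact mul_le_one₀ (hφ k).le (norm_nonneg _) ih

lemma norm_wordFactor_lt_one (hφ : ∀ k, ‖φ k‖ < 1) {x : List (Fin n)} (hx : x ≠ []) :
    ‖wordFactor φ x‖ < 1 := by
  obtain ⟨k, x, rfl⟩ := List.exists_cons_of_ne_nil hx
  rw [wordFactor_cons, norm_mul]
  exact mul_lt_one_of_nonneg_of_lt_one_left (norm_nonneg _) (hφ k)
    (norm_wordFactor_le_one hφ x)

lemma wordMap_append (x y : List (Fin n)) (z : ℂ) :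
    wordMap T (x ++ y) z = wordMap T x (wordMap T y z) := by
  induction x with
  | nil => rfl
  | cons k x ih => simp [wordMap, ih]

lemma wordMap_sub (hT : ∀ k z, T k z = p k + φ k * (z - p k)) (x : List (Fin n)) (z w : ℂ) :
    wordMap T x z - wordMap T x w = wordFactor φ x * (z - w) := by
  induction x with
  | nil => simp [wordMap, wordFactor]
  | cons k x ih =>
    simp only [wordMap, Function.comp_apply, hT, wordFactor_cons]
    linear_combination φ k * ih

lemma wordMap_eq_add_mul (hT : ∀ k z, T k z = p k + φ k * (z - p k)) (x : List (Fin n))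
    (z : ℂ) : wordMap T x z = wordMap T x 0 + wordFactor φ x * z := by
  linear_combination wordMap_sub hT x z 0

lemma wordMap_injective (hT : ∀ k z, T k z = p k + φ k * (z - p k)) (hφ : ∀ k, φ k ≠ 0)
    (x : List (Fin n)) : Injective (wordMap T x) := fun z w h => by
  rw [wordMap_eq_add_mul hT x z, wordMap_eq_add_mul hT x w] at h
  exact mul_left_cancel₀ (wordFactor_ne_zero hφ x) (add_left_cancel h)

lemma Function.IsFixedPt.eq_of_wordMap (hT : ∀ k z, T k z = p k + φ k * (z - p k))
    (hφ : ∀ k, ‖φ k‖ < 1) {x : List (Fin n)} (hx : x ≠ []) {z w : ℂ}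
    (hz : IsFixedPt (wordMap T x) z) (hw : IsFixedPt (wordMap T x) w) : z = w := by
  have hzw : (1 - wordFactor φ x) * (z - w) = 0 := by
    linear_combination hw.eq - hz.eq + wordMap_sub hT x z w
  have hfactor : 1 - wordFactor φ x ≠ 0 := fun h => by
    simpa [← sub_eq_zero.mp h] using norm_wordFactor_lt_one hφ hx
  exact sub_eq_zero.mp ((mul_eq_zero.mp hzw).resolve_left hfactor)

lemma mapsTo_wordMap {F : Set ℂ} (hF : ∀ k, MapsTo (T k) F F) (x : List (Fin n)) :
    MapsTo (wordMap T x) F F := by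
  induction x with
  | nil => exact mapsTo_id F
  | cons k x ih => exact (hF k).comp ih

lemma IsExtremal.of_wordMap_eq (hT : ∀ k z, T k z = p k + φ k * (z - p k))
    (hφ : ∀ k, φ k ≠ 0) {F : Set ℂ} (hF : ∀ k, MapsTo (T k) F F) {e g : ℂ}
    (he : IsExtremal F e) (hg : g ∈ F) {x : List (Fin n)} (hge : wordMap T x g = e) :
    IsExtremal F g := by
  have hmaps := mapsTo_wordMap hF x
  rw [funext (wordMap_eq_add_mul hT x)] at hmaps hge
  exact he.of_add_mul (wordFactor_ne_zero hφ x) hmaps hg hge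

lemma invFun_wordMap_spec (hT : ∀ k z, T k z = p k + φ k * (z - p k)) (hφ : ∀ k, φ k ≠ 0)
    {F : Set ℂ} {e : ℂ} {x : List (Fin n)} (he : e ∈ wordMap T x '' F) :
    invFun (wordMap T x) e ∈ F ∧ wordMap T x (invFun (wordMap T x) e) = e := by
  obtain ⟨z, hz, rfl⟩ := he
  rw [leftInverse_invFun (wordMap_injective hT hφ x) z]
  exact ⟨hz, rfl⟩

lemma eq_wordMap_of_wordMap_append_eq (hT : ∀ k z, T k z = p k + φ k * (z - p k))
    (hφ₀ : ∀ k, φ k ≠ 0) (hφ₁ : ∀ k, ‖φ k‖ < 1) {u v : List (Fin n)} (hv : v ≠ [])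
    {q g e : ℂ} (hq : IsFixedPt (wordMap T v) q) (hu : wordMap T u g = e)
    (huv : wordMap T (u ++ v) g = e) : e = wordMap T u q := by
  rw [wordMap_append] at huv
  have hg : IsFixedPt (wordMap T v) g := wordMap_injective hT hφ₀ u (huv.trans hu.symm)
  rw [← hu, hg.eq_of_wordMap hT hφ₁ hv hq]

end WordMap

theorem inverse_iterates_distinct_of_not_eventually_periodic_general {n : ℕ}
    (p φ : Fin n → ℂ)
    (hφ : ∀ k, 0 < ‖φ k‖ ∧ ‖φ k‖ < 1)
    (T : Fin n → ℂ → ℂ) (hT : ∀ k z, T k z = p k + φ k * (z - p k))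
    (F : Set ℂ)
    (hFinv : F = ⋃ k, T k '' F)
    (pp : List (Fin n) → ℂ) (hpp : ∀ x, x ≠ [] → wordMap T x (pp x) = pp x)
    (e : ℂ) (he : IsExtremal F e)
    (a : ℕ → Fin n)
    (ha : ∀ L : ℕ, e ∈ wordMap T (List.ofFn fun i : Fin L => a i) '' F)
    (hnep : ¬ ∃ (c y : List (Fin n)), y ≠ [] ∧ e = wordMap T c (pp y)) :
    (∀ L : ℕ, IsExtremal F
      (Function.invFun (wordMap T (List.ofFn fun i : Fin L => a i)) e)) ∧
    (∀ L L' : ℕ, L ≠ L' →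
      Function.invFun (wordMap T (List.ofFn fun i : Fin L => a i)) e ≠
        Function.invFun (wordMap T (List.ofFn fun i : Fin L' => a i)) e) ∧
    {z | IsExtremal F z}.Infinite := by
  set g : ℕ → ℂ := fun L => invFun (wordMap T (List.ofFn fun i : Fin L => a i)) e
  have hφ₀ k : φ k ≠ 0 := norm_pos_iff.mp (hφ k).1
  have hF k : MapsTo (T k) F F :=
    mapsTo_iff_image_subset.mpr ((subset_iUnion (fun k => T k '' F) k).trans hFinv.ge)
  have hspec L : g L ∈ F ∧ wordMap T (List.ofFn fun i : Fin L => a i) (g L) = e :=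
    invFun_wordMap_spec hT hφ₀ (ha L)
  have hext L : IsExtremal F (g L) := he.of_wordMap_eq hT hφ₀ hF (hspec L).1 (hspec L).2
  have hinj : Injective g := by
    refine Injective.of_lt_imp_ne fun L L' hLL' hg => ?_
    obtain ⟨d, rfl⟩ := Nat.exists_eq_add_of_le hLL'.le
    have hv : (List.ofFn fun j : Fin d => a (L + j)) ≠ [] := by
      rw [Ne, List.ofFn_eq_nil_iff]
      omega
    have huv := (hspec (L + d)).2
    rw [← hg, List.ofFn_add_eq_append] at huv
    exact hnep ⟨_, _, hv, eq_wordMap_of_wordMap_append_eq hT hφ₀ (fun k => (hφ k).2) hv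
      (hpp _ hv) (hspec L).2 huv⟩
  exact ⟨hext, fun L L' h => hinj.ne h, infinite_of_injective_forall_mem hinj hext⟩

/-- if `e ∈ Ext(F)` has infinite address `a` (that is, `e ∈ T_{a|L}(F)` for each
prefix `a|L`) and `e` is not eventually periodic, then the inverse iterates
`T_{a|L}⁻¹(e)` are pairwise distinct extremal points of `F`; in particular `Ext(F)` is
infinite. -/
theorem inverse_iterates_distinct_of_not_eventually_periodic {n : ℕ} (hn : 1 ≤ n)
    (p φ : Fin n → ℂ)
    (hφ : ∀ k, 0 < ‖φ k‖ ∧ ‖φ k‖ < 1)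
    (T : Fin n → ℂ → ℂ) (hT : ∀ k z, T k z = p k + φ k * (z - p k))
    (F : Set ℂ) (hFne : F.Nonempty) (hFc : IsCompact F)
    (hFinv : F = ⋃ k, T k '' F)
    (pp : List (Fin n) → ℂ) (hpp : ∀ x, x ≠ [] → wordMap T x (pp x) = pp x)
    (e : ℂ) (he : IsExtremal F e)
    (a : ℕ → Fin n)
    (ha : ∀ L : ℕ, e ∈ wordMap T (List.ofFn fun i : Fin L => a i) '' F)
    (hnep : ¬ ∃ (c y : List (Fin n)), y ≠ [] ∧ e = wordMap T c (pp y)) :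
    (∀ L : ℕ, IsExtremal F
      (Function.invFun (wordMap T (List.ofFn fun i : Fin L => a i)) e)) ∧
    (∀ L L' : ℕ, L ≠ L' →
      Function.invFun (wordMap T (List.ofFn fun i : Fin L => a i)) e ≠
        Function.invFun (wordMap T (List.ofFn fun i : Fin L' => a i)) e) ∧
    {z | IsExtremal F z}.Infinite :=
  inverse_iterates_distinct_of_not_eventually_periodic_general p φ hφ T hT F hFinv pp hpp e he a ha
    hnep
end
end

section
/- If every factor φ_k is a real number in (0,1) (a Sierpiński fractal), then conv(F) = conv({p_1,…,p_n}); in particular every extremal point of F is one of the fixed points p_1,…,p_n. -/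
/-!
Each `T_k` is the homothety with centre `p_k` and ratio `r_k ∈ (0,1)`, so it maps the convex set
`C = conv {p_1, …, p_n}` into itself. A compact set covered by contracted copies of itself lies
in every nonempty closed set that the contractions leave invariant, hence `F ⊆ C`; conversely
`F` is invariant under `T_k`, so it contains the fixed point `p_k`. An extremal point
`e = T_k w` of `F` with `w ≠ p_k` would lie strictly between `w` and `p_k`.
-/

open Complex

noncomputable section

open Set Metric AffineMap

theorem Set.mapsTo_of_iUnion_image_subset {X ι : Type*} {f : ι → X → X} {s : Set X}
    (h : ⋃ i, f i '' s ⊆ s) (i : ι) : MapsTo (f i) s s :=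
  mapsTo_iff_image_subset.2 ((subset_iUnion (fun j => f j '' s) i).trans h)

section Contractions

variable {X : Type*} [MetricSpace X]

theorem Metric.infDist_apply_le_of_mapsTo {f : X → X} {K : NNReal} {s : Set X}
    (hf : LipschitzWith K f) (hfs : MapsTo f s s) (x : X) :
    infDist (f x) s ≤ K * infDist x s := by
  rcases s.eq_empty_or_nonempty with rfl | hs
  · simp
  have : Nonempty s := hs.to_subtype
  rw [infDist_eq_iInf (x := x), Real.mul_iInf_of_nonneg K.coe_nonneg]
  refine le_ciInf fun y => ?_
  calc infDist (f x) s ≤ dist (f x) (f y) := infDist_le_dist_of_mem (hfs y.2)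
    _ ≤ K * dist x y := hf.dist_le_mul x y

/-- Comparing the point of `F` farthest from `C` with its preimage under the contraction
covering it shows that this largest distance is zero. -/
theorem IsCompact.subset_of_subset_iUnion_image {ι : Type*} {F C : Set X} {f : ι → X → X}
    {K : ι → NNReal} (hf : ∀ i, ContractingWith (K i) (f i)) (hF : IsCompact F)
    (hFf : F ⊆ ⋃ i, f i '' F) (hC : IsClosed C) (hCne : C.Nonempty)
    (hfC : ∀ i, MapsTo (f i) C C) : F ⊆ C := by
  rcases F.eq_empty_or_nonempty with rfl | hFne
  · exact empty_subset C
  obtain ⟨z, hzF, hzmax⟩ :=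
    hF.exists_isMaxOn hFne (continuous_infDist_pt C).continuousOn
  obtain ⟨i, w, hwF, rfl⟩ := mem_iUnion.mp (hFf hzF)
  have hz : infDist (f i w) C ≤ K i * infDist (f i w) C :=
    (infDist_apply_le_of_mapsTo (hf i).2 (hfC i) w).trans
      (mul_le_mul_of_nonneg_left (hzmax hwF) (K i).coe_nonneg)
  have hz0 : infDist (f i w) C = 0 := by
    nlinarith [infDist_nonneg (x := f i w) (s := C), show (K i : ℝ) < 1 from (hf i).1]
  intro x hx
  rw [hC.mem_iff_infDist_zero hCne]
  exact le_antisymm (hz0 ▸ hzmax hx) infDist_nonneg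

theorem ContractingWith.fixedPoint_mem [Nonempty X] [CompleteSpace X] {f : X → X} {K : NNReal}
    (hf : ContractingWith K f) {s : Set X} (hs : IsClosed s) (hne : s.Nonempty)
    (hfs : MapsTo f s s) : fixedPoint f hf ∈ s := by
  obtain ⟨x, hx⟩ := hne
  exact hs.mem_of_tendsto (hf.tendsto_iterate_fixedPoint x)
    (Filter.Eventually.of_forall fun m => hfs.iterate m hx)

end Contractions

theorem dist_homothety_homothety {𝕜 E : Type*} [NormedField 𝕜] [SeminormedAddCommGroup E]
    [NormedSpace 𝕜 E] (c x y : E) (r : 𝕜) :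
    dist (homothety c r x) (homothety c r y) = ‖r‖ * dist x y := by
  simp only [homothety_apply, vsub_eq_sub, vadd_eq_add, dist_eq_norm, add_sub_add_right_eq_sub,
    ← smul_sub, sub_sub_sub_cancel_right, norm_smul]

section Homotheties

variable {E : Type*} [NormedAddCommGroup E] [NormedSpace ℝ E]

theorem contractingWith_homothety (c : E) {r : ℝ} (hr : ‖r‖ < 1) :
    ContractingWith ‖r‖₊ (homothety c r) :=
  ⟨hr, LipschitzWith.of_dist_le_mul fun x y => (dist_homothety_homothety c x y r).le⟩

theorem Convex.mapsTo_homothety {s : Set E} (hs : Convex ℝ s) {c : E} (hc : c ∈ s) {r : ℝ}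
    (hr : r ∈ Icc 0 1) : MapsTo (homothety c r) s s := fun x hx => by
  rw [homothety_eq_lineMap]
  exact hs.lineMap_mem hc hx hr

theorem IsClosed.center_mem_of_mapsTo_homothety [CompleteSpace E] {s : Set E} (hs : IsClosed s)
    (hne : s.Nonempty) {c : E} {r : ℝ} (hr : ‖r‖ < 1) (hcs : MapsTo (homothety c r) s s) :
    c ∈ s := by
  have hcontr := contractingWith_homothety c hr
  rw [hcontr.fixedPoint_unique (homothety_apply_same c r)]
  exact hcontr.fixedPoint_mem hs hne hcs

theorem IsCompact.convexHull_eq_of_eq_iUnion_image_homothety [CompleteSpace E] {ι : Type*}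
    [Finite ι] {F : Set E} (hF : IsCompact F) (hFne : F.Nonempty) (c : ι → E) (r : ι → ℝ)
    (hr : ∀ i, r i ∈ Ico 0 1) (hFinv : F = ⋃ i, homothety (c i) (r i) '' F) :
    convexHull ℝ F = convexHull ℝ (range c) := by
  have hr_norm : ∀ i, ‖r i‖ < 1 := fun i => by rw [Real.norm_of_nonneg (hr i).1]; exact (hr i).2
  have hcF : ∀ i, c i ∈ F := fun i =>
    hF.isClosed.center_mem_of_mapsTo_homothety hFne (hr_norm i)
      (mapsTo_of_iUnion_image_subset hFinv.superset i)
  have hcC : ∀ i, c i ∈ convexHull ℝ (range c) := fun i => subset_convexHull ℝ _ ⟨i, rfl⟩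
  obtain ⟨i₀, -⟩ := mem_iUnion.mp (hFinv.subset hFne.some_mem)
  have hFC : F ⊆ convexHull ℝ (range c) :=
    hF.subset_of_subset_iUnion_image (fun i => contractingWith_homothety (c i) (hr_norm i))
      hFinv.subset ((finite_range c).isCompact_convexHull (𝕜 := ℝ)).isClosed ⟨c i₀, hcC i₀⟩
      fun i => (convex_convexHull ℝ _).mapsTo_homothety (hcC i) ⟨(hr i).1, (hr i).2.le⟩
  exact (convexHull_min hFC (convex_convexHull ℝ _)).antisymm
    (convexHull_mono (range_subset_iff.mpr hcF))

end Homotheties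

theorem IsExtremal.eq_center_of_homothety {F : Set ℂ} {c w : ℂ} {r : ℝ}
    (he : IsExtremal F (homothety c r w)) (hc : c ∈ F) (hw : w ∈ F) (hr : r ∈ Ioo 0 1) :
    homothety c r w = c := by
  by_cases hwc : w = c
  · rw [hwc, homothety_apply_same]
  · refine (he.2 ⟨w, c, hw, hc, hwc, r, hr.1, hr.2, ?_⟩).elim
    rw [homothety_eq_lineMap, lineMap_apply_module, add_comm]

theorem sierpinski_convex_hull_general {n : ℕ} (p φ : Fin n → ℂ)
    (T : Fin n → ℂ → ℂ) (hT : ∀ k z, T k z = p k + φ k * (z - p k))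
    (F : Set ℂ) (hFne : F.Nonempty) (hFc : IsCompact F)
    (hFinv : F = ⋃ k, T k '' F)
    (hreal : ∀ k, ∃ r : ℝ, 0 < r ∧ r < 1 ∧ φ k = (r : ℂ)) :
    convexHull ℝ F = convexHull ℝ (Set.range p) ∧
    (∀ e, IsExtremal F e → ∃ k, e = p k) := by
  choose r hr0 hr1 hφ using hreal
  have hT : T = fun k => ⇑(homothety (p k) (r k)) := by
    ext1 k; ext1 z
    rw [hT, hφ, homothety_apply, vsub_eq_sub, vadd_eq_add, real_smul, add_comm]
  subst hT
  have hconv := hFc.convexHull_eq_of_eq_iUnion_image_homothety hFne p r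
    (fun k => ⟨(hr0 k).le, hr1 k⟩) hFinv
  refine ⟨hconv, fun e he => ?_⟩
  obtain ⟨k, w, hwF, rfl⟩ := mem_iUnion.mp (hFinv.subset he.1)
  have hpF : p k ∈ F := hFc.isClosed.center_mem_of_mapsTo_homothety hFne
    (by rw [Real.norm_of_nonneg (hr0 k).le]; exact hr1 k)
    (mapsTo_of_iUnion_image_subset hFinv.superset k)
  exact ⟨k, he.eq_center_of_homothety hpF hwF ⟨hr0 k, hr1 k⟩⟩

/-- if every factor `φ_k` is a real number in `(0,1)` (a Sierpiński fractal),
then `conv F = conv {p_1, …, p_n}`; in particular every extremal point of `F` is one of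
the fixed points. -/
theorem sierpinski_convex_hull {n : ℕ} (hn : 1 ≤ n) (p φ : Fin n → ℂ)
    (hφ : ∀ k, 0 < ‖φ k‖ ∧ ‖φ k‖ < 1)
    (T : Fin n → ℂ → ℂ) (hT : ∀ k z, T k z = p k + φ k * (z - p k))
    (F : Set ℂ) (hFne : F.Nonempty) (hFc : IsCompact F)
    (hFinv : F = ⋃ k, T k '' F)
    (hreal : ∀ k, ∃ r : ℝ, 0 < r ∧ r < 1 ∧ φ k = (r : ℂ)) :
    convexHull ℝ F = convexHull ℝ (Set.range p) ∧
    (∀ e, IsExtremal F e → ∃ k, e = p k) :=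
  sierpinski_convex_hull_general p φ T hT F hFne hFc hFinv hreal
end
end

section
/- Extremal Theorem, part 1: let τ ∈ ℂ \ {0} and let a be a finite word over {1,…,n} such that M(τ) ⊆ T_a(F). Then M(τ) = T_a(M(conj(φ_a)·τ)). (Since conj(φ_a)·τ is a positive scalar multiple of e^{−ν(a)i}·τ, where ν(a) is the total rotation angle of T_a modulo 2π, it has the same maximizer set as e^{−ν(a)i}·τ.) -/
open Complex

noncomputable section

/-- The set of maximizers of the target function `z ↦ ⟨τ,z⟩ = Re(conj τ · z)` over `F`. -/
def maxSet (F : Set ℂ) (τ : ℂ) : Set ℂ :=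
  {z | z ∈ F ∧ ∀ w ∈ F, ((starRingEnd ℂ) τ * w).re ≤ ((starRingEnd ℂ) τ * z).re}

open Set

/-
`T_a` is affine, `T_a z = c + φ_a z`, so `⟨τ, T_a z⟩ = ⟨τ, c⟩ + ⟨conj(φ_a) τ, z⟩`: along `T_a`,
the target function for `τ` is the one for `conj(φ_a) τ` shifted by a constant. Since `T_a` maps `F` into `F`
and `M(τ) ⊆ T_a(F)`, comparing values at a preimage of a maximizer gives both inclusions.
-/

theorem wordMap_eq_affine {n : ℕ} {φ : Fin n → ℂ} {T : Fin n → ℂ → ℂ}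
    (hT : ∀ k, ∃ b, ∀ z, T k z = b + φ k * z) (a : List (Fin n)) :
    ∃ c, ∀ z, wordMap T a z = c + wordFactor φ a * z := by
  induction a with
  | nil => exact ⟨0, fun z => by simp [wordMap, wordFactor]⟩
  | cons k a ih =>
    obtain ⟨c, hc⟩ := ih
    obtain ⟨b, hb⟩ := hT k
    refine ⟨b + φ k * c, fun z => ?_⟩
    simp only [wordMap, Function.comp_apply, hc, hb, wordFactor, List.map_cons, List.prod_cons]
    ring

theorem wordMap_mapsTo {n : ℕ} {T : Fin n → ℂ → ℂ} {F : Set ℂ} (hT : ∀ k, MapsTo (T k) F F)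
    (a : List (Fin n)) : MapsTo (wordMap T a) F F := by
  induction a with
  | nil => exact mapsTo_id F
  | cons k a ih => exact (hT k).comp ih

theorem maxSet_nonempty {F : Set ℂ} (hFc : IsCompact F) (hFne : F.Nonempty) (τ : ℂ) :
    (maxSet F τ).Nonempty := by
  obtain ⟨z, hz, hmax⟩ :=
    hFc.exists_isMaxOn hFne (f := fun z => ((starRingEnd ℂ) τ * z).re) (by fun_prop)
  exact ⟨z, hz, fun w hw => hmax hw⟩

theorem re_conj_mul_affine (τ c m z : ℂ) :
    ((starRingEnd ℂ) τ * (c + m * z)).re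
      = ((starRingEnd ℂ) τ * c).re + ((starRingEnd ℂ) ((starRingEnd ℂ) m * τ) * z).re := by
  simp only [map_mul, starRingEnd_self_apply, mul_add, add_re]
  ring_nf

theorem re_conj_mul_affine_le_iff (τ c m w z : ℂ) :
    ((starRingEnd ℂ) τ * (c + m * w)).re ≤ ((starRingEnd ℂ) τ * (c + m * z)).re ↔
      ((starRingEnd ℂ) ((starRingEnd ℂ) m * τ) * w).re
        ≤ ((starRingEnd ℂ) ((starRingEnd ℂ) m * τ) * z).re := by
  rw [re_conj_mul_affine, re_conj_mul_affine, add_le_add_iff_left]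

theorem maxSet_eq_image_of_affine {F : Set ℂ} {f : ℂ → ℂ} {c m : ℂ} (hf : ∀ z, f z = c + m * z)
    (hfF : MapsTo f F F) {τ : ℂ} (hne : (maxSet F τ).Nonempty) (hsub : maxSet F τ ⊆ f '' F) :
    maxSet F τ = f '' maxSet F ((starRingEnd ℂ) m * τ) := by
  have hle (w z : ℂ) := hf w ▸ hf z ▸ re_conj_mul_affine_le_iff τ c m w z
  ext y
  constructor
  · intro hy
    obtain ⟨z, hz, rfl⟩ := hsub hy
    exact ⟨z, ⟨hz, fun w hw => (hle w z).1 (hy.2 _ (hfF hw))⟩, rfl⟩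
  · rintro ⟨z, ⟨hz, hzmax⟩, rfl⟩
    refine ⟨hfF hz, fun w hw => ?_⟩
    obtain ⟨y₀, hy₀⟩ := hne
    obtain ⟨w₀, hw₀, rfl⟩ := hsub hy₀
    exact (hy₀.2 w hw).trans ((hle w₀ z).2 (hzmax w₀ hw₀))

theorem extremal_theorem_part1_general {n : ℕ} (p φ : Fin n → ℂ)
    (T : Fin n → ℂ → ℂ) (hT : ∀ k z, T k z = p k + φ k * (z - p k))
    (F : Set ℂ) (hFne : F.Nonempty) (hFc : IsCompact F)
    (hFinv : F = ⋃ k, T k '' F)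
    (τ : ℂ) (a : List (Fin n))
    (hMa : maxSet F τ ⊆ wordMap T a '' F) :
    maxSet F τ = wordMap T a '' maxSet F ((starRingEnd ℂ) (wordFactor φ a) * τ) := by
  obtain ⟨c, hc⟩ := wordMap_eq_affine (T := T) (φ := φ)
    (fun k => ⟨p k - φ k * p k, fun z => by rw [hT]; ring⟩) a
  have hTF : ∀ k, MapsTo (T k) F F := fun k =>
    mapsTo_iff_image_subset.2 ((subset_iUnion (fun k => T k '' F) k).trans hFinv.symm.subset)
  exact maxSet_eq_image_of_affine hc (wordMap_mapsTo hTF a) (maxSet_nonempty hFc hFne τ) hMa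

/-- Extremal Theorem, part 1: if `M(τ) ⊆ T_a(F)` then
`M(τ) = T_a(M(conj(φ_a)·τ))`. -/
theorem extremal_theorem_part1 {n : ℕ} (hn : 1 ≤ n) (p φ : Fin n → ℂ)
    (hφ : ∀ k, 0 < ‖φ k‖ ∧ ‖φ k‖ < 1)
    (T : Fin n → ℂ → ℂ) (hT : ∀ k z, T k z = p k + φ k * (z - p k))
    (F : Set ℂ) (hFne : F.Nonempty) (hFc : IsCompact F)
    (hFinv : F = ⋃ k, T k '' F)
    (τ : ℂ) (hτ : τ ≠ 0) (a : List (Fin n))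
    (hMa : maxSet F τ ⊆ wordMap T a '' F) :
    maxSet F τ = wordMap T a '' maxSet F ((starRingEnd ℂ) (wordFactor φ a) * τ) :=
  extremal_theorem_part1_general p φ T hT F hFne hFc hFinv τ a hMa
end
end

section
/- Normal-form composition formula for bifractals: let T_1(z) = φ_1·z and T_2(z) = 1 + φ_2·(z − 1) with φ_1, φ_2 ∈ ℂ. For every L ∈ ℕ ∪ {0}, all nonnegative integers n_0, n_1, …, n_L, and every z ∈ ℂ, writing s_j := n_0 + n_1 + ⋯ + n_j, one has T_1^{n_0} T_2 T_1^{n_1} T_2 ⋯ T_1^{n_L} T_2 (z) = (1 − φ_2)·Σ_{j=0}^{L} φ_1^{s_j} φ_2^{j} + φ_1^{s_L} φ_2^{L+1}·z; in particular T_1^{n_0} T_2 T_1^{n_1} T_2 ⋯ T_1^{n_L} T_2 (0) = (1 − φ_2)·Σ_{j=0}^{L} φ_1^{s_j} φ_2^{j}. -/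
/-! Peeling off the first block `T₁^{n₀} T₂` multiplies the tail's sum by `φ₁^{n₀} φ₂`,
because the partial sums of the tail are those of `nn` shifted by `n₀`; induction on `L`
does the rest. -/

noncomputable section

/-- The alternating composition `T₁^{m₀} ∘ T₂ ∘ T₁^{m₁} ∘ T₂ ∘ ⋯ ∘ T₁^{m_L} ∘ T₂`
encoded by the list `[m₀, m₁, …, m_L]` of exponents. -/
def chain (T₁ T₂ : ℂ → ℂ) : List ℕ → ℂ → ℂ
  | [] => id
  | m :: ms => (T₁^[m]) ∘ T₂ ∘ chain T₁ T₂ ms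

open Finset

theorem sum_range_pow_partialSum_succ {R : Type*} [CommSemiring R] (a b : R) (n : ℕ → ℕ)
    (L : ℕ) :
    ∑ j ∈ range (L + 2), a ^ (∑ k ∈ range (j + 1), n k) * b ^ j =
      a ^ n 0 * (1 + b * ∑ j ∈ range (L + 1), a ^ (∑ k ∈ range (j + 1), n (k + 1)) * b ^ j) := by
  have partialSum_succ (j : ℕ) :
      ∑ k ∈ range (j + 1 + 1), n k = n 0 + ∑ k ∈ range (j + 1), n (k + 1) := by
    rw [sum_range_succ' n (j + 1), add_comm]
  rw [sum_range_succ', mul_add, mul_sum, mul_sum, add_comm]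
  simp only [partialSum_succ, pow_add, zero_add, sum_range_one, pow_zero, mul_one]
  congr 1
  exact sum_congr rfl fun j _ => by ring

section

variable {φ₁ φ₂ : ℂ} {T₁ T₂ : ℂ → ℂ}

theorem chain_cons_apply (hT₁ : ∀ z, T₁ z = φ₁ * z) (hT₂ : ∀ z, T₂ z = 1 + φ₂ * (z - 1))
    (m : ℕ) (ms : List ℕ) (z : ℂ) :
    chain T₁ T₂ (m :: ms) z = φ₁ ^ m * (1 + φ₂ * (chain T₁ T₂ ms z - 1)) := by
  obtain rfl : T₁ = (φ₁ * ·) := funext hT₁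
  rw [chain, Function.comp_apply, Function.comp_apply, mul_left_iterate_apply, hT₂]

theorem chain_ofFn_apply (hT₁ : ∀ z, T₁ z = φ₁ * z) (hT₂ : ∀ z, T₂ z = 1 + φ₂ * (z - 1))
    (L : ℕ) (nn : ℕ → ℕ) (z : ℂ) :
    chain T₁ T₂ (List.ofFn fun j : Fin (L + 1) => nn j) z =
      (1 - φ₂) * ∑ j ∈ range (L + 1), φ₁ ^ (∑ k ∈ range (j + 1), nn k) * φ₂ ^ j +
        φ₁ ^ (∑ k ∈ range (L + 1), nn k) * φ₂ ^ (L + 1) * z := by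
  induction L generalizing nn with
  | zero =>
    rw [List.ofFn_succ, List.ofFn_zero, chain_cons_apply hT₁ hT₂]
    simp only [chain, id_eq, Fin.val_zero, zero_add, sum_range_one]
    ring
  | succ L ih =>
    rw [List.ofFn_succ, chain_cons_apply hT₁ hT₂]
    simp only [Fin.val_zero, Fin.val_succ]
    rw [ih fun k => nn (k + 1), sum_range_pow_partialSum_succ, sum_range_succ' nn (L + 1),
      add_comm _ (nn 0), pow_add]
    ring

end

/-- normal-form composition formula for bifractals: with `T₁(z) = φ₁z` and
`T₂(z) = 1 + φ₂(z − 1)`, for every `L`, all exponents `n₀, …, n_L ∈ ℕ`, and every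
`z ∈ ℂ`, writing `s_j = n₀ + ⋯ + n_j`, one has
`T₁^{n₀}T₂T₁^{n₁}T₂⋯T₁^{n_L}T₂(z) = (1 − φ₂)·∑_{j=0}^{L} φ₁^{s_j}φ₂^j + φ₁^{s_L}φ₂^{L+1}z`;
in particular the value at `z = 0` is `(1 − φ₂)·∑_{j=0}^{L} φ₁^{s_j}φ₂^j`. -/
theorem bifractal_normal_form_composition (φ₁ φ₂ : ℂ) (T₁ T₂ : ℂ → ℂ)
    (hT₁ : ∀ z, T₁ z = φ₁ * z) (hT₂ : ∀ z, T₂ z = 1 + φ₂ * (z - 1))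
    (L : ℕ) (nn : ℕ → ℕ) (z : ℂ) :
    chain T₁ T₂ (List.ofFn fun j : Fin (L + 1) => nn j) z =
      (1 - φ₂) * ∑ j ∈ Finset.range (L + 1),
          φ₁ ^ (∑ k ∈ Finset.range (j + 1), nn k) * φ₂ ^ j +
        φ₁ ^ (∑ k ∈ Finset.range (L + 1), nn k) * φ₂ ^ (L + 1) * z ∧
    chain T₁ T₂ (List.ofFn fun j : Fin (L + 1) => nn j) 0 =
      (1 - φ₂) * ∑ j ∈ Finset.range (L + 1),
          φ₁ ^ (∑ k ∈ Finset.range (j + 1), nn k) * φ₂ ^ j :=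
  ⟨chain_ofFn_apply hT₁ hT₂ L nn z, by simpa using chain_ofFn_apply hT₁ hT₂ L nn 0⟩
end
end
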